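/- Let Ā be a real m×m matrix, ρ > 0, and h > τ_d > 0 scalars, P₀h and P₁d real symmetric m×m matrices, G₂ a real symmetric m×m matrix, and J̃ a real m×m matrix. Suppose P₀h is positive definite and the 2m×2m block matrix [[e^{−2ρ(h−τ_d)}·P₁d + G₂, J̃ᵀ·exp(Āᵀ(h−τ_d))·P₀h], [(J̃ᵀ·exp(Āᵀ(h−τ_d))·P₀h)ᵀ, P₀h]] is positive definite. Then for every ξ ∈ ℝ^m with ξᵀ·G₂·ξ ≤ 0, one has (J̃·ξ)ᵀ · (e^{2ρ(h−τ_d)}·exp(Āᵀ(h−τ_d))·P₀h·exp(Ā(h−τ_d))) · (J̃·ξ) ≤ ξᵀ·P₁d·ξ. -/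

import Mathlib

open Matrix NormedSpace

namespace Matrix

variable {m n R : Type*} [Fintype m] [Fintype n] [CommRing R]

theorem dotProduct_transpose_mul_mul_mulVec (E : Matrix n m R) (P : Matrix n n R) (x : m → R) :
    x ⬝ᵥ (Eᵀ * P * E) *ᵥ x = (E *ᵥ x) ⬝ᵥ P *ᵥ (E *ᵥ x) := by
  rw [← mulVec_mulVec, ← mulVec_mulVec, dotProduct_transpose_mulVec, dotProduct_comm]

variable [PartialOrder R] [IsOrderedAddMonoid R] [StarRing R] [TrivialStar R]

-- Testing the block form against `(x, -Cᵀx)` leaves exactly `xᵀAx - (Cᵀx)ᵀD(Cᵀx)`.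
theorem PosSemidef.dotProduct_mulVec_le_of_fromBlocks {A : Matrix m m R} {C : Matrix m n R}
    {D : Matrix n n R} (h : (fromBlocks A (C * D) (C * D)ᵀ D).PosSemidef) (x : m → R) :
    (Cᵀ *ᵥ x) ⬝ᵥ D *ᵥ (Cᵀ *ᵥ x) ≤ x ⬝ᵥ A *ᵥ x := by
  set y := Cᵀ *ᵥ x
  have hcross : x ⬝ᵥ (C * D) *ᵥ y = y ⬝ᵥ D *ᵥ y := by
    rw [← mulVec_mulVec, dotProduct_mulVec, ← mulVec_transpose]
  have hnonneg := h.dotProduct_mulVec_nonneg (Sum.elim x (-y))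
  simp only [star_trivial, fromBlocks_mulVec, sumElim_dotProduct_sumElim, dotProduct_add,
    mulVec_neg, dotProduct_neg, neg_dotProduct, Sum.elim_comp_inl, Sum.elim_comp_inr,
    dotProduct_transpose_mulVec, hcross] at hnonneg
  rw [← sub_nonneg]
  convert hnonneg using 1
  abel

end Matrix

theorem stmt6_general (m : ℕ) (Abar : Matrix (Fin m) (Fin m) ℝ) (ρ h τd : ℝ)
    (P0h P1d G₂ : Matrix (Fin m) (Fin m) ℝ) (Jtilde : Matrix (Fin m) (Fin m) ℝ)
    (hLMI : (Matrix.fromBlocks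
        (Real.exp (-(2 * ρ * (h - τd))) • P1d + G₂)
        (Jtildeᵀ * exp ((h - τd) • Abarᵀ) * P0h)
        (Jtildeᵀ * exp ((h - τd) • Abarᵀ) * P0h)ᵀ
        P0h).PosDef) :
    ∀ ξ : Fin m → ℝ, ξ ⬝ᵥ G₂ *ᵥ ξ ≤ 0 →
      (Jtilde *ᵥ ξ) ⬝ᵥ
          (Real.exp (2 * ρ * (h - τd)) •
            (exp ((h - τd) • Abarᵀ) * P0h * exp ((h - τd) • Abar))) *ᵥ
          (Jtilde *ᵥ ξ) ≤
        ξ ⬝ᵥ P1d *ᵥ ξ := by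
  intro ξ hξ
  set c := 2 * ρ * (h - τd)
  set E := exp ((h - τd) • Abar)
  have hET : exp ((h - τd) • Abarᵀ) = Eᵀ := by rw [← transpose_smul, exp_transpose]
  rw [hET] at hLMI ⊢
  have hschur := hLMI.posSemidef.dotProduct_mulVec_le_of_fromBlocks ξ
  rw [transpose_mul, transpose_transpose, transpose_transpose, ← mulVec_mulVec, add_mulVec,
    dotProduct_add, smul_mulVec, dotProduct_smul, smul_eq_mul] at hschur
  rw [smul_mulVec, dotProduct_smul, dotProduct_transpose_mul_mul_mulVec, smul_eq_mul]
  calc Real.exp c * ((E *ᵥ Jtilde *ᵥ ξ) ⬝ᵥ P0h *ᵥ (E *ᵥ Jtilde *ᵥ ξ))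
      ≤ Real.exp c * (Real.exp (-c) * (ξ ⬝ᵥ P1d *ᵥ ξ)) := by gcongr; linarith
    _ = ξ ⬝ᵥ P1d *ᵥ ξ := by
      rw [← mul_assoc, ← Real.exp_add, add_neg_cancel, Real.exp_zero, one_mul]

/-- Schur complement / S-procedure step for the second LMI of Corollary 4.1:
positive definiteness of the block matrix
`[[e^{−2ρ(h−τ_d)}·P₁d + G₂, J̃ᵀ·exp(Āᵀ(h−τ_d))·P₀h], [(J̃ᵀ·exp(Āᵀ(h−τ_d))·P₀h)ᵀ, P₀h]]`
implies that for every `ξ` with `ξᵀG₂ξ ≤ 0`,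
`(J̃ξ)ᵀ · (e^{2ρ(h−τ_d)}·exp(Āᵀ(h−τ_d))·P₀h·exp(Ā(h−τ_d))) · (J̃ξ) ≤ ξᵀ·P₁d·ξ`. -/
theorem stmt6 (m : ℕ) (Abar : Matrix (Fin m) (Fin m) ℝ) (ρ h τd : ℝ)
    (hρ : 0 < ρ) (hτd : 0 < τd) (hh : τd < h)
    (P0h P1d G₂ : Matrix (Fin m) (Fin m) ℝ) (Jtilde : Matrix (Fin m) (Fin m) ℝ)
    (hP0h : P0h.IsSymm) (hP1d : P1d.IsSymm) (hG₂ : G₂.IsSymm)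
    (hP0hpos : P0h.PosDef)
    (hLMI : (Matrix.fromBlocks
        (Real.exp (-(2 * ρ * (h - τd))) • P1d + G₂)
        (Jtildeᵀ * exp ((h - τd) • Abarᵀ) * P0h)
        (Jtildeᵀ * exp ((h - τd) • Abarᵀ) * P0h)ᵀ
        P0h).PosDef) :
    ∀ ξ : Fin m → ℝ, ξ ⬝ᵥ G₂ *ᵥ ξ ≤ 0 →
      (Jtilde *ᵥ ξ) ⬝ᵥ
          (Real.exp (2 * ρ * (h - τd)) •
            (exp ((h - τd) • Abarᵀ) * P0h * exp ((h - τd) • Abar))) *ᵥ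
          (Jtilde *ᵥ ξ) ≤
        ξ ⬝ᵥ P1d *ᵥ ξ :=
  stmt6_general m Abar ρ h τd P0h P1d G₂ Jtilde hLMI
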